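/- Let n ≥ 1, m, k ∈ ℤ, ε = ±1. On the open subset U of ℝ^{2n} consisting of points (λ,μ) where the entries of λ are pairwise distinct and nonzero, the Stäckel Hamiltonians Poisson-commute: {H_i^{n,m,k}, H_j^{n,m,k}} = 0 on U for all i, j ∈ {1,…,n}, where {F,G} = ∑_{r=1}^n (∂F/∂λ_r · ∂G/∂μ_r − ∂F/∂μ_r · ∂G/∂λ_r) is the canonical Poisson bracket. -/

import Mathlib

noncomputable section

/-- Viète polynomial `q_i(λ) = (-1)^i e_i(λ)`; by convention `q_0 = 1` and `q_i = 0` for `i > n`. -/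
def viete {n : ℕ} (i : ℕ) (lam : Fin n → ℝ) : ℝ :=
  (-1 : ℝ) ^ i * ∑ s ∈ Finset.powersetCard i (Finset.univ : Finset (Fin n)), ∏ j ∈ s, lam j

/-- The partial derivative `∂q_i/∂λ_j` of the `i`-th Viète polynomial. -/
def vieteD {n : ℕ} (i : ℕ) (lam : Fin n → ℝ) (j : Fin n) : ℝ :=
  fderiv ℝ (viete i) lam (Pi.single j 1)

/-- `Δ_j(λ) = ∏_{s ≠ j} (λ_j - λ_s)`. -/
def Delta {n : ℕ} (lam : Fin n → ℝ) (j : Fin n) : ℝ :=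
  ∏ s ∈ Finset.univ.erase j, (lam j - lam s)

/-- Benenti potentials `V_i^{(k)}` for `k ≥ 0`: `Vpos n q k i = V_i^{(k)}(q)` (`i` 1-based),
with `V_i^{(0)} = δ_{i n}` and `V_i^{(k+1)} = V_{i+1}^{(k)} - q_i V_1^{(k)}`, `V_{n+1}^{(k)} := 0`. -/
def Vpos (n : ℕ) (q : ℕ → ℝ) : ℕ → ℕ → ℝ
  | 0, i => if i = n then 1 else 0
  | k + 1, i => (if i = n then 0 else Vpos n q k (i + 1)) - q i * Vpos n q k 1

/-- Benenti potentials for negative superscripts: `Vneg n q j r = V_r^{(-j)}(q)`, via the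
backward recursion `V_r^{(k)} = V_{r-1}^{(k+1)} - (q_{r-1}/q_n) V_n^{(k+1)}`, with
`V_0 := 0` and `q_0 := 1`. -/
def Vneg (n : ℕ) (q : ℕ → ℝ) : ℕ → ℕ → ℝ
  | 0, r => if r = n then 1 else 0
  | j + 1, r =>
      (if r = 1 then 0 else Vneg n q j (r - 1)) -
        (if r = 1 then 1 else q (r - 1)) / q n * Vneg n q j n

/-- Benenti potential `V_i^{(k)}(q)` for `k : ℤ`, `i` 1-based. -/
def benenti (n : ℕ) (q : ℕ → ℝ) (k : ℤ) (i : ℕ) : ℝ :=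
  if 0 ≤ k then Vpos n q k.toNat i else Vneg n q (-k).toNat i

/-- Stäckel Hamiltonian of Benenti type
`H_i^{n,m,k}(λ,μ) = ∑_j (-∂q_i/∂λ_j)(λ) (λ_j^m/Δ_j(λ)) μ_j² + (ε/4) V_i^{(k)}(q(λ))`
(`i` 1-based). -/
def stackelH (n : ℕ) (m k : ℤ) (ε : ℝ) (i : ℕ) (lam mu : Fin n → ℝ) : ℝ :=
  (∑ j : Fin n, (-vieteD i lam j) * (lam j ^ m / Delta lam j) * mu j ^ 2) +
    ε / 4 * benenti n (fun a => viete a lam) k i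

/-!
The Hamiltonians `H_u := stackelH n m k ε (u + 1)` satisfy the Stäckel separation relations
`∑_u λ_r^{n-1-u} H_u(λ, μ) = λ_r^m μ_r² + (ε/4) λ_r^k`, one for each `r`. For the kinetic part this is
Vieta's formula `∏_j (x - λ_j) = ∑_i q_i(λ) x^{n-i}` differentiated in `λ_s`; for the potential part
it says that `(x^{n-1}, …, x, 1)` is a left eigenvector, with eigenvalue `x` (resp. `x⁻¹`), of the
linear recursion defining `V^{(k+1)}` from `V^{(k)}` (resp. `V^{(k-1)}` from `V^{(k)}`) whenever `x`
is a root of `∑_i q_i x^{n-i}`.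

The `r`-th relation involves `(λ, μ)` only through `(λ_r, μ_r)`, so differentiating it along `λ_s` or
`μ_s` with `s ≠ r` kills every term except `∑_u λ_r^{n-1-u} ∂H_u`. Hence the invertible Vandermonde
matrix `(λ_r^{n-1-u})` maps both gradient vectors `(∂H_u/∂λ_s)_u` and `(∂H_u/∂μ_s)_u` onto the line
through `e_s`; they are therefore proportional, and each summand of `{H_i, H_j}` vanishes.
-/

open Filter Topology Finset
open scoped Matrix

theorem Matrix.mul_sub_mul_eq_zero_of_mulVec_eq_zero_of_ne {R ι : Type*} [CommRing R]
    [Fintype ι] [DecidableEq ι] {S : Matrix ι ι R} (hS : IsUnit S.det) {x y : ι → R} {s : ι}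
    (hx : ∀ r ≠ s, (S *ᵥ x) r = 0) (hy : ∀ r ≠ s, (S *ᵥ y) r = 0) (i j : ι) :
    x i * y j - y i * x j = 0 := by
  have hcol : ∀ v : ι → R, (∀ r ≠ s, (S *ᵥ v) r = 0) → ∀ i, v i = S⁻¹ i s * (S *ᵥ v) s := by
    intro v hv i
    have hsingle : S *ᵥ v = Pi.single s ((S *ᵥ v) s) := by
      ext r
      by_cases hrs : r = s
      · subst hrs; simp
      · simp [hv r hrs, hrs]
    calc v i = (S⁻¹ *ᵥ (S *ᵥ v)) i := by
          rw [Matrix.mulVec_mulVec, Matrix.nonsing_inv_mul S hS, Matrix.one_mulVec]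
      _ = S⁻¹ i s * (S *ᵥ v) s := by rw [hsingle, Matrix.mulVec_single]; simp
  rw [hcol x hx i, hcol x hx j, hcol y hy i, hcol y hy j]
  ring

/-- Along `e_s` the coefficients `c u (y r)` stay frozen, so the relation makes a fixed linear
combination of the `G u` constant on the line `z + t • e_s`. -/
theorem sum_mul_fderiv_single_eq_zero_of_eventually {ι : Type*} [Fintype ι] {n : ℕ}
    {G : ι → (Fin n → ℝ) → ℝ} {z : Fin n → ℝ} {c : ι → ℝ → ℝ} {φ : ℝ → ℝ} {r s : Fin n}
    (hrs : r ≠ s) (hG : ∀ u, DifferentiableAt ℝ (G u) z)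
    (hrel : ∀ᶠ y in 𝓝 z, ∑ u, c u (y r) * G u y = φ (y r)) :
    ∑ u, c u (z r) * fderiv ℝ (G u) z (Pi.single s 1) = 0 := by
  set F : (Fin n → ℝ) → ℝ := fun y => ∑ u, c u (z r) * G u y
  have hF : DifferentiableAt ℝ F z := by fun_prop
  have hline : Tendsto (fun t : ℝ => z + t • Pi.single s 1) (𝓝 0) (𝓝 z) := by
    have : Continuous (fun t : ℝ => z + t • (Pi.single s 1 : Fin n → ℝ)) := by fun_prop
    simpa using this.tendsto 0
  have hconst : (fun t : ℝ => F (z + t • Pi.single s 1)) =ᶠ[𝓝 0] fun _ => φ (z r) := by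
    filter_upwards [hline.eventually hrel] with t ht
    simpa [F, Pi.single_apply, hrs] using ht
  have hzero := hF.lineDeriv_eq_fderiv (v := Pi.single s 1)
  rw [lineDeriv, hconst.deriv_eq, deriv_const] at hzero
  calc ∑ u, c u (z r) * fderiv ℝ (G u) z (Pi.single s 1) = fderiv ℝ F z (Pi.single s 1) := by
        rw [fderiv_fun_sum fun u _ => (hG u).const_mul _]
        simp [fderiv_const_mul (hG _)]
    _ = 0 := hzero.symm

def poissonBracket {n : ℕ} (F G : (Fin n → ℝ) → (Fin n → ℝ) → ℝ) (lam mu : Fin n → ℝ) : ℝ :=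
  ∑ r : Fin n,
    (fderiv ℝ (fun l => F l mu) lam (Pi.single r 1) *
        fderiv ℝ (fun w => G lam w) mu (Pi.single r 1) -
      fderiv ℝ (fun w => F lam w) mu (Pi.single r 1) *
        fderiv ℝ (fun l => G l mu) lam (Pi.single r 1))

theorem poissonBracket_eq_zero_of_separation {n : ℕ} {f : Fin n → Fin n → ℝ → ℝ}
    {ψ : Fin n → ℝ → ℝ → ℝ} {H : Fin n → (Fin n → ℝ) → (Fin n → ℝ) → ℝ} {lam mu : Fin n → ℝ}
    (hdet : IsUnit (Matrix.of fun r u => f r u (lam r)).det)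
    (hsep : ∀ᶠ p in 𝓝 (lam, mu), ∀ r, ∑ u, f r u (p.1 r) * H u p.1 p.2 = ψ r (p.1 r) (p.2 r))
    (hH_lam : ∀ u, DifferentiableAt ℝ (fun l => H u l mu) lam)
    (hH_mu : ∀ u, DifferentiableAt ℝ (H u lam) mu) (i j : Fin n) :
    poissonBracket (H i) (H j) lam mu = 0 := by
  have hsep_lam : ∀ᶠ l in 𝓝 lam, ∀ r, ∑ u, f r u (l r) * H u l mu = ψ r (l r) (mu r) :=
    (Continuous.prodMk_left mu).tendsto lam |>.eventually hsep
  have hsep_mu : ∀ᶠ w in 𝓝 mu, ∀ r, ∑ u, f r u (lam r) * H u lam w = ψ r (lam r) (w r) :=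
    (Continuous.prodMk_right lam).tendsto mu |>.eventually hsep
  refine Finset.sum_eq_zero fun s _ => ?_
  refine Matrix.mul_sub_mul_eq_zero_of_mulVec_eq_zero_of_ne hdet (s := s)
    (x := fun u => fderiv ℝ (fun l => H u l mu) lam (Pi.single s 1))
    (y := fun u => fderiv ℝ (H u lam) mu (Pi.single s 1)) (fun r hrs => ?_) (fun r hrs => ?_) i j
  · exact sum_mul_fderiv_single_eq_zero_of_eventually (φ := fun x => ψ r x (mu r)) hrs hH_lam
      (hsep_lam.mono fun l hl => hl r)
  · exact sum_mul_fderiv_single_eq_zero_of_eventually (c := fun u _ => f r u (lam r)) hrs hH_mu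
      (hsep_mu.mono fun w hw => hw r)

theorem Matrix.isUnit_det_vandermonde_rev {K : Type*} [Field K] {n : ℕ} {v : Fin n → K}
    (hv : Function.Injective v) :
    IsUnit (Matrix.of fun r u : Fin n => v r ^ (n - 1 - (u : ℕ))).det := by
  have h : (Matrix.of fun r u : Fin n => v r ^ (n - 1 - (u : ℕ))) =
      (Matrix.vandermonde v).submatrix id Fin.revPerm := by
    ext r u
    simp [Matrix.vandermonde, Fin.val_rev, Nat.sub_sub, add_comm]
  rw [h, Matrix.det_permute']
  exact ((Equiv.Perm.sign _).isUnit.map (Int.castRingHom K)).mul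
    (isUnit_iff_ne_zero.2 (Matrix.det_vandermonde_ne_zero_iff.2 hv))

theorem eventually_injective_nhds {ι X : Type*} [Finite ι] [TopologicalSpace X] [T2Space X]
    {f : ι → X} (hf : Function.Injective f) : ∀ᶠ g in 𝓝 f, Function.Injective g := by
  simp only [Function.injective_iff_pairwise_ne, Pairwise, Function.onFun]
  refine eventually_all.2 fun a => eventually_all.2 fun b => ?_
  by_cases hab : a = b
  · exact Eventually.of_forall fun _ h => (h hab).elim
  · exact (((continuous_apply a).continuousAt.ne_iff_eventually_ne
      (continuous_apply b).continuousAt).1 (hf.ne hab)).mono fun _ h _ => h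

section Viete

variable {n : ℕ}

theorem prod_sub_eq_sum_viete (l : Fin n → ℝ) (x : ℝ) :
    ∏ j, (x - l j) = ∑ i ∈ range (n + 1), viete i l * x ^ (n - i) := by
  have h := congrArg (Polynomial.eval x)
    (Multiset.prod_X_sub_X_eq_sum_esymm (univ.val.map l))
  simp only [Multiset.map_map, Function.comp_def, Polynomial.eval_multiset_prod,
    Polynomial.eval_sub, Polynomial.eval_X, Polynomial.eval_C,
    Multiset.card_map, Polynomial.eval_finsetSum, Polynomial.eval_mul, Polynomial.eval_pow,
    Polynomial.eval_neg, Polynomial.eval_one, Finset.esymm_map_val] at h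
  rw [Finset.card_val, Finset.card_univ, Fintype.card_fin] at h
  rw [Finset.prod_eq_multiset_prod, h]
  refine Finset.sum_congr rfl fun i _ => ?_
  rw [viete]
  ring

theorem sum_viete_mul_pow_apply_eq_zero (l : Fin n → ℝ) (r : Fin n) :
    ∑ i ∈ range (n + 1), viete i l * l r ^ (n - i) = 0 := by
  rw [← prod_sub_eq_sum_viete]
  exact Finset.prod_eq_zero (mem_univ r) (sub_self _)

theorem viete_zero (l : Fin n → ℝ) : viete 0 l = 1 := by simp [viete]

theorem viete_self (l : Fin n → ℝ) : viete n l = ∏ j, -l j := by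
  have h : powersetCard n (univ : Finset (Fin n)) = {univ} := by
    simpa using Finset.powersetCard_self (univ : Finset (Fin n))
  simp [viete, h, Finset.prod_neg]

theorem viete_self_ne_zero {l : Fin n → ℝ} (h0 : ∀ r, l r ≠ 0) : viete n l ≠ 0 := by
  rw [viete_self]
  exact Finset.prod_ne_zero_iff.2 fun j _ => neg_ne_zero.2 (h0 j)

theorem contDiff_viete (i : ℕ) : ContDiff ℝ ⊤ (viete i : (Fin n → ℝ) → ℝ) := by
  unfold viete
  fun_prop

theorem differentiable_viete (i : ℕ) : Differentiable ℝ (viete i : (Fin n → ℝ) → ℝ) :=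
  (contDiff_viete i).differentiable (by simp)

theorem differentiableAt_vieteD (i : ℕ) (j : Fin n) (lam : Fin n → ℝ) :
    DifferentiableAt ℝ (fun l => vieteD i l j) lam :=
  (((contDiff_viete i).fderiv_right (m := 1) le_top).clm_apply contDiff_const).differentiable
    one_ne_zero lam

theorem vieteD_zero (l : Fin n → ℝ) (s : Fin n) : vieteD 0 l s = 0 := by
  have h : (viete 0 : (Fin n → ℝ) → ℝ) = fun _ => 1 := funext viete_zero
  simp [vieteD, h]

theorem sum_pow_mul_neg_vieteD (l : Fin n → ℝ) (s : Fin n) (x : ℝ) :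
    ∑ u ∈ range n, x ^ (n - 1 - u) * -vieteD (u + 1) l s = ∏ j ∈ univ.erase s, (x - l j) := by
  have hprod : HasFDerivAt (fun l' : Fin n → ℝ => ∏ j, (x - l' j))
      (∑ j, (∏ j' ∈ univ.erase j, (x - l j')) • -(ContinuousLinearMap.proj j : (Fin n → ℝ) →L[ℝ] ℝ))
      l :=
    HasFDerivAt.finsetProd fun j _ => (hasFDerivAt_apply j l).const_sub x
  have hsum : fderiv ℝ (fun l' : Fin n → ℝ => ∑ i ∈ range (n + 1), viete i l' * x ^ (n - i)) l
      (Pi.single s 1) = ∑ i ∈ range (n + 1), vieteD i l s * x ^ (n - i) := by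
    rw [fderiv_fun_sum fun i _ => (differentiable_viete i l).mul_const _]
    simp [fderiv_mul_const (differentiable_viete _ l), vieteD, mul_comm]
  have hvieta := congrArg (fun F => fderiv ℝ F l (Pi.single s 1))
    (funext fun l' => prod_sub_eq_sum_viete l' x)
  simp only [hprod.fderiv, hsum] at hvieta
  rw [Finset.sum_range_succ', vieteD_zero, zero_mul, add_zero] at hvieta
  simp [Pi.single_apply] at hvieta
  rw [← neg_neg (∏ j ∈ univ.erase s, (x - l j)), hvieta, ← Finset.sum_neg_distrib]
  refine Finset.sum_congr rfl fun u _ => ?_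
  rw [Nat.sub_sub, add_comm 1 u]
  ring

end Viete

theorem pow_sub_eq_mul_pow_sub_succ {M : Type*} [Monoid M] (a : M) {n t : ℕ} (h : t < n) :
    a ^ (n - t) = a * a ^ (n - (t + 1)) := by
  rw [show n - t = n - (t + 1) + 1 by omega, pow_succ']

section Benenti

variable {n : ℕ} {q : ℕ → ℝ} {x : ℝ}

/-- For a root `x` of `∑ q_i x^{n-i}`, the row `(x^{n-1}, …, x, 1)` is a left eigenvector, with
eigenvalue `x`, of the forward Benenti recursion. -/
theorem sum_pow_mul_forward_step (hq0 : q 0 = 1)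
    (hx : ∑ i ∈ range (n + 1), q i * x ^ (n - i) = 0) (V : ℕ → ℝ) :
    ∑ t ∈ range n, x ^ (n - 1 - t) *
        ((if t + 1 = n then 0 else V (t + 1 + 1)) - q (t + 1) * V 1) =
      x * ∑ t ∈ range n, x ^ (n - 1 - t) * V (t + 1) := by
  cases n with
  | zero => simp
  | succ n =>
    rw [Finset.sum_range_succ', hq0, one_mul] at hx
    have hroot : ∑ t ∈ range (n + 1), x ^ (n - t) * q (t + 1) = -x ^ (n + 1) := by
      rw [← sub_eq_zero, sub_neg_eq_add, ← hx]
      simp [mul_comm]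
    simp only [Nat.add_sub_cancel, mul_sub, Finset.sum_sub_distrib]
    rw [Finset.sum_range_succ, Finset.sum_range_succ' (fun t => x ^ (n - t) * V (t + 1))]
    simp only [if_pos, Nat.sub_self, mul_zero, add_zero]
    have hshift : ∀ t ∈ range n, x ^ (n - t) * (if t + 1 = n + 1 then 0 else V (t + 1 + 1)) =
        x * (x ^ (n - (t + 1)) * V (t + 1 + 1)) := fun t ht => by
      rw [if_neg (by simp at ht; omega), pow_sub_eq_mul_pow_sub_succ x (by simpa using ht)]
      ring
    rw [Finset.sum_congr rfl hshift, ← Finset.mul_sum]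
    simp only [← mul_assoc, ← Finset.sum_mul, hroot, Nat.sub_zero]
    ring

theorem sum_pow_mul_backward_step (hx0 : x ≠ 0) (hqn : q n ≠ 0)
    (hx : ∑ i ∈ range (n + 1), q i * x ^ (n - i) = 0) (V : ℕ → ℝ) :
    ∑ t ∈ range n, x ^ (n - 1 - t) * ((if t = 0 then 0 else V t) - q t / q n * V n) =
      x⁻¹ * ∑ t ∈ range n, x ^ (n - 1 - t) * V (t + 1) := by
  cases n with
  | zero => simp
  | succ n =>
    rw [Finset.sum_range_succ, Nat.sub_self, pow_zero, mul_one] at hx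
    have hroot : ∑ t ∈ range (n + 1), x ^ (n - t) * q t = -q (n + 1) / x := by
      rw [eq_div_iff hx0, Finset.sum_mul, ← sub_eq_zero, sub_neg_eq_add, ← hx]
      refine congrArg (· + _) (Finset.sum_congr rfl fun t ht => ?_)
      rw [show n + 1 - t = n - t + 1 by simp at ht; omega, pow_succ]
      ring
    simp only [Nat.add_sub_cancel, mul_sub, Finset.sum_sub_distrib]
    rw [Finset.sum_range_succ', Finset.sum_range_succ (fun t => x ^ (n - t) * V (t + 1))]
    have hshift : ∀ t ∈ range n, x ^ (n - t) * V (t + 1) = x * (x ^ (n - (t + 1)) * V (t + 1)) :=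
      fun t ht => by rw [pow_sub_eq_mul_pow_sub_succ x (by simpa using ht)]; ring
    have hlast : ∑ t ∈ range (n + 1), x ^ (n - t) * (q t / q (n + 1) * V (n + 1)) =
        -x⁻¹ * V (n + 1) := by
      simp only [← mul_assoc, ← Finset.sum_mul, mul_div_assoc', ← Finset.sum_div, hroot]
      field_simp
    simp only [Nat.add_eq_zero_iff, one_ne_zero, and_false, if_false, if_true, mul_zero,
      add_zero, Nat.sub_self, pow_zero, one_mul, hlast]
    rw [Finset.sum_congr rfl hshift, ← Finset.mul_sum]
    field_simp
    ring

theorem sum_pow_mul_indicator_top (hn : 1 ≤ n) :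
    ∑ t ∈ range n, x ^ (n - 1 - t) * (if t + 1 = n then 1 else 0) = 1 := by
  obtain ⟨n, rfl⟩ := Nat.exists_eq_add_of_le' hn
  simp

theorem sum_pow_mul_Vpos (hn : 1 ≤ n) (hq0 : q 0 = 1)
    (hx : ∑ i ∈ range (n + 1), q i * x ^ (n - i) = 0) (K : ℕ) :
    ∑ t ∈ range n, x ^ (n - 1 - t) * Vpos n q K (t + 1) = x ^ K := by
  induction K with
  | zero => exact sum_pow_mul_indicator_top hn
  | succ K ih => rw [pow_succ, ← ih, mul_comm, ← sum_pow_mul_forward_step hq0 hx]; rfl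

theorem sum_pow_mul_Vneg (hn : 1 ≤ n) (hq0 : q 0 = 1) (hx0 : x ≠ 0) (hqn : q n ≠ 0)
    (hx : ∑ i ∈ range (n + 1), q i * x ^ (n - i) = 0) (J : ℕ) :
    ∑ t ∈ range n, x ^ (n - 1 - t) * Vneg n q J (t + 1) = (x ^ J)⁻¹ := by
  induction J with
  | zero => rw [pow_zero, inv_one]; exact sum_pow_mul_indicator_top hn
  | succ J ih =>
    rw [pow_succ, mul_inv, ← ih, mul_comm, ← sum_pow_mul_backward_step hx0 hqn hx]
    refine Finset.sum_congr rfl fun t _ => ?_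
    cases t <;> simp [Vneg, hq0]

theorem sum_pow_mul_benenti (hn : 1 ≤ n) (hq0 : q 0 = 1) (hx0 : x ≠ 0) (hqn : q n ≠ 0)
    (hx : ∑ i ∈ range (n + 1), q i * x ^ (n - i) = 0) (k : ℤ) :
    ∑ t ∈ range n, x ^ (n - 1 - t) * benenti n q k (t + 1) = x ^ k := by
  by_cases hk : 0 ≤ k
  · simp only [benenti, if_pos hk, sum_pow_mul_Vpos hn hq0 hx]
    rw [← zpow_natCast, Int.toNat_of_nonneg hk]
  · simp only [benenti, if_neg hk, sum_pow_mul_Vneg hn hq0 hx0 hqn hx]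
    rw [← zpow_natCast, ← _root_.zpow_neg, Int.toNat_of_nonneg (by omega), neg_neg]

variable {E : Type*} [NormedAddCommGroup E] [NormedSpace ℝ E] {q : E → ℕ → ℝ} {z : E}

theorem differentiableAt_Vpos (hq : ∀ a, DifferentiableAt ℝ (fun y => q y a) z) (K i : ℕ) :
    DifferentiableAt ℝ (fun y => Vpos n (q y) K i) z := by
  induction K generalizing i with
  | zero => simp only [Vpos]; fun_prop
  | succ K ih =>
    have hnext := ih (i + 1)
    have hfirst := ih 1
    have hqi := hq i
    by_cases hi : i = n <;> simp only [Vpos, hi, if_true, if_false] <;> fun_prop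

theorem differentiableAt_Vneg (hq : ∀ a, DifferentiableAt ℝ (fun y => q y a) z)
    (hqn : q z n ≠ 0) (J r : ℕ) : DifferentiableAt ℝ (fun y => Vneg n (q y) J r) z := by
  induction J generalizing r with
  | zero => simp only [Vneg]; fun_prop
  | succ J ih =>
    have hprev := ih (r - 1)
    have hlast := ih n
    have hqprev := hq (r - 1)
    have hqlast := hq n
    by_cases hr : r = 1 <;> simp only [Vneg, hr, if_true, if_false] <;>
      fun_prop (disch := exact hqn)

theorem differentiableAt_benenti (hq : ∀ a, DifferentiableAt ℝ (fun y => q y a) z)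
    (hqn : q z n ≠ 0) (k : ℤ) (i : ℕ) : DifferentiableAt ℝ (fun y => benenti n (q y) k i) z := by
  by_cases hk : 0 ≤ k
  · simpa only [benenti, if_pos hk] using differentiableAt_Vpos hq k.toNat i
  · simpa only [benenti, if_neg hk] using differentiableAt_Vneg hq hqn (-k).toNat i

end Benenti

section StackelHamiltonian

variable {n : ℕ} (m k : ℤ) (ε : ℝ)

theorem Delta_ne_zero {l : Fin n → ℝ} (hl : Function.Injective l) (s : Fin n) : Delta l s ≠ 0 :=
  Finset.prod_ne_zero_iff.2 fun _ hj => sub_ne_zero.2 (hl.ne (Finset.ne_of_mem_erase hj).symm)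

theorem differentiableAt_Delta (j : Fin n) (lam : Fin n → ℝ) :
    DifferentiableAt ℝ (fun l => Delta l j) lam := by
  unfold Delta; fun_prop

theorem sum_pow_mul_stackelH {l : Fin n → ℝ} (hl : Function.Injective l) (h0 : ∀ r, l r ≠ 0)
    (w : Fin n → ℝ) (r : Fin n) :
    ∑ u : Fin n, l r ^ (n - 1 - (u : ℕ)) * stackelH n m k ε ((u : ℕ) + 1) l w =
      l r ^ m * w r ^ 2 + ε / 4 * l r ^ k := by
  have hkin : ∀ s, (∏ j ∈ univ.erase s, (l r - l j)) * (l s ^ m / Delta l s) * w s ^ 2 =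
      if s = r then l r ^ m * w r ^ 2 else 0 := by
    intro s
    split_ifs with hsr
    · subst hsr
      rw [← Delta, mul_div_cancel₀ _ (Delta_ne_zero hl s)]
    · rw [Finset.prod_eq_zero (Finset.mem_erase.2 ⟨Ne.symm hsr, mem_univ r⟩) (sub_self _)]
      ring
  rw [Fin.sum_univ_eq_sum_range (fun u => l r ^ (n - 1 - u) * stackelH n m k ε (u + 1) l w)]
  simp only [stackelH, mul_add, Finset.sum_add_distrib, Finset.mul_sum]
  rw [Finset.sum_comm]
  simp only [← mul_assoc, ← Finset.sum_mul, sum_pow_mul_neg_vieteD]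
  congr 1
  · simp [hkin]
  · rw [← sum_pow_mul_benenti r.pos (viete_zero l) (h0 r) (viete_self_ne_zero h0)
      (sum_viete_mul_pow_apply_eq_zero l r) k, Finset.mul_sum]
    exact Finset.sum_congr rfl fun _ _ => by ring

theorem eventually_sum_pow_mul_stackelH {lam : Fin n → ℝ} (hlam : Function.Injective lam)
    (h0 : ∀ r, lam r ≠ 0) (mu : Fin n → ℝ) :
    ∀ᶠ p in 𝓝 (lam, mu), ∀ r, ∑ u : Fin n, p.1 r ^ (n - 1 - (u : ℕ)) *
      stackelH n m k ε ((u : ℕ) + 1) p.1 p.2 = p.1 r ^ m * p.2 r ^ 2 + ε / 4 * p.1 r ^ k := by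
  have h0_nhds : ∀ᶠ l in 𝓝 lam, ∀ r, l r ≠ 0 :=
    eventually_all.2 fun r => (continuous_apply r).continuousAt.eventually_ne (h0 r)
  filter_upwards [(eventually_injective_nhds hlam).prod_inl_nhds mu, h0_nhds.prod_inl_nhds mu]
    with p hinj hne r
  exact sum_pow_mul_stackelH m k ε hinj hne p.2 r

theorem differentiableAt_stackelH_left (i : ℕ) {lam : Fin n → ℝ}
    (hlam : Function.Injective lam) (h0 : ∀ r, lam r ≠ 0) (mu : Fin n → ℝ) :
    DifferentiableAt ℝ (fun l => stackelH n m k ε i l mu) lam := by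
  have hvieteD := differentiableAt_vieteD (lam := lam) i
  have hDelta := differentiableAt_Delta (lam := lam)
  have hpot := differentiableAt_benenti (fun a => differentiable_viete a lam)
    (viete_self_ne_zero h0) k i
  simp only [stackelH, div_eq_mul_inv]
  fun_prop (disch := first | exact Or.inl (h0 _) | exact Delta_ne_zero hlam _)

theorem differentiableAt_stackelH_right (i : ℕ) (lam mu : Fin n → ℝ) :
    DifferentiableAt ℝ (stackelH n m k ε i lam) mu := by
  unfold stackelH; fun_prop

end StackelHamiltonian

theorem stackel_poisson_commute_general (n : ℕ) (m k : ℤ) (ε : ℝ)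
    (i j : ℕ) (hi1 : 1 ≤ i) (hi2 : i ≤ n) (hj1 : 1 ≤ j) (hj2 : j ≤ n)
    (lam mu : Fin n → ℝ) (hlam : Function.Injective lam) (h0 : ∀ r, lam r ≠ 0) :
    (∑ r : Fin n,
        (fderiv ℝ (fun l => stackelH n m k ε i l mu) lam (Pi.single r 1) *
            fderiv ℝ (fun w => stackelH n m k ε j lam w) mu (Pi.single r 1) -
          fderiv ℝ (fun w => stackelH n m k ε i lam w) mu (Pi.single r 1) *
            fderiv ℝ (fun l => stackelH n m k ε j l mu) lam (Pi.single r 1))) = 0 := by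
  obtain ⟨i, rfl⟩ : ∃ t : Fin n, (t : ℕ) + 1 = i := ⟨⟨i - 1, by omega⟩, by simp; omega⟩
  obtain ⟨j, rfl⟩ : ∃ t : Fin n, (t : ℕ) + 1 = j := ⟨⟨j - 1, by omega⟩, by simp; omega⟩
  exact poissonBracket_eq_zero_of_separation (f := fun _ u x => x ^ (n - 1 - (u : ℕ)))
    (ψ := fun _ x y => x ^ m * y ^ 2 + ε / 4 * x ^ k) (H := fun u => stackelH n m k ε ((u : ℕ) + 1))
    (Matrix.isUnit_det_vandermonde_rev hlam) (eventually_sum_pow_mul_stackelH m k ε hlam h0 mu)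
    (fun _ => differentiableAt_stackelH_left m k ε _ hlam h0 mu)
    (fun _ => differentiableAt_stackelH_right m k ε _ lam mu) i j

theorem stackel_poisson_commute (n : ℕ) (hn : 1 ≤ n) (m k : ℤ) (ε : ℝ)
    (hε : ε = 1 ∨ ε = -1) (i j : ℕ) (hi1 : 1 ≤ i) (hi2 : i ≤ n) (hj1 : 1 ≤ j) (hj2 : j ≤ n)
    (lam mu : Fin n → ℝ) (hlam : Function.Injective lam) (h0 : ∀ r, lam r ≠ 0) :
    (∑ r : Fin n,
        (fderiv ℝ (fun l => stackelH n m k ε i l mu) lam (Pi.single r 1) *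
            fderiv ℝ (fun w => stackelH n m k ε j lam w) mu (Pi.single r 1) -
          fderiv ℝ (fun w => stackelH n m k ε i lam w) mu (Pi.single r 1) *
            fderiv ℝ (fun l => stackelH n m k ε j l mu) lam (Pi.single r 1))) = 0 :=
  stackel_poisson_commute_general n m k ε i j hi1 hi2 hj1 hj2 lam mu hlam h0
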